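/- For |q|<1, (q;q)_∞² · ∑_{k=0}^∞ q^k/(q;q)_k² = (q;q)_∞ · ∑_{k=0}^∞ q^{k²+k}/(q;q)_k². (Ramanujan's false theta identity from the Lost Notebook.) -/

import Mathlib

noncomputable def qPoch (q : ℝ) (n : ℕ) : ℝ := ∏ j ∈ Finset.range n, (1 - q ^ (j + 1))

/-!
Both sides are limits of the finite identity
`∑_{k ≤ N} q^k / (q;q)_k² = ∑_{i+j=N} q^(i²+i) / ((q;q)_i² (q;q)_j)`,
whose increments in `N` reduce, via `1 / (q;q)_(j+1) = 1 / (q;q)_j + q^(j+1) / (q;q)_(j+1)`, to the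
finite Durfee square identity `∑_{i+j=N} q^(i²) / ((q;q)_i² (q;q)_j) = 1 / (q;q)_N²`. The latter
holds more generally with `q^(i²+mi) / ((q;q)_i (q;q)_j (q;q)_(m+i))` and right side
`1 / ((q;q)_N (q;q)_(m+N))`, which follows by induction on `N` from the q-Pascal rule
`1 - q^(i+j) = (1 - q^j) + q^j (1 - q^i)`. As `N → ∞`, `(q;q)_j⁻¹ → (q;q)_∞⁻¹` and Tannery's
theorem turns the right side of the finite identity into `(q;q)_∞⁻¹ ∑ q^(k²+k) / (q;q)_k²`.
-/

open Finset Finset.Nat Filter Topology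

theorem tendsto_sum_antidiagonal_mul_of_tendsto {R : Type*} [NormedRing R] [CompleteSpace R]
    {a b : ℕ → R} {L : R} (ha : Summable fun k => ‖a k‖) (hb : Tendsto b atTop (𝓝 L)) :
    Tendsto (fun n => ∑ p ∈ antidiagonal n, a p.1 * b p.2) atTop (𝓝 ((∑' k, a k) * L)) := by
  obtain ⟨C, hC⟩ := hb.norm.bddAbove_range
  have hbC (n : ℕ) : ‖b n‖ ≤ C := hC ⟨n, rfl⟩
  set f : ℕ → ℕ → R := fun n k => if k ≤ n then a k * b (n - k) else 0
  have hf_tendsto (k : ℕ) : Tendsto (f · k) atTop (𝓝 (a k * L)) := by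
    refine ((hb.comp (tendsto_sub_atTop_nat k)).const_mul (a k)).congr' ?_
    filter_upwards [eventually_ge_atTop k] with n hn
    exact (if_pos hn).symm
  have hf_le (n k : ℕ) : ‖f n k‖ ≤ ‖a k‖ * C := by
    by_cases hk : k ≤ n
    · simp only [f, if_pos hk]
      exact (norm_mul_le _ _).trans (mul_le_mul_of_nonneg_left (hbC _) (norm_nonneg _))
    · simp only [f, if_neg hk, norm_zero]
      exact mul_nonneg (norm_nonneg _) ((norm_nonneg _).trans (hbC 0))
  have hf_sum (n : ℕ) : ∑' k, f n k = ∑ p ∈ antidiagonal n, a p.1 * b p.2 := by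
    rw [tsum_eq_sum (s := range (n + 1)) fun k hk => if_neg (by simpa using hk),
      sum_antidiagonal_eq_sum_range_succ_mk]
    exact sum_congr rfl fun k hk => if_pos (Nat.lt_succ_iff.1 (mem_range.1 hk))
  rw [← ha.of_norm.tsum_mul_right]
  exact (tendsto_tsum_of_dominated_convergence (ha.mul_right C) hf_tendsto
    (.of_forall hf_le)).congr hf_sum

section

variable {q : ℝ}

@[simp]
lemma qPoch_zero : qPoch q 0 = 1 := prod_range_zero _

lemma qPoch_succ (n : ℕ) : qPoch q (n + 1) = qPoch q n * (1 - q ^ (n + 1)) :=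
  prod_range_succ _ _

lemma one_sub_pow_succ_ne_zero (hq : ∀ n : ℕ, q ^ (n + 1) ≠ 1) (n : ℕ) : 1 - q ^ (n + 1) ≠ 0 :=
  sub_ne_zero.2 (hq n).symm

lemma qPoch_ne_zero (hq : ∀ n : ℕ, q ^ (n + 1) ≠ 1) (n : ℕ) : qPoch q n ≠ 0 :=
  prod_ne_zero_iff.2 fun j _ => one_sub_pow_succ_ne_zero hq j

noncomputable def durfeeSum (q : ℝ) (m n : ℕ) : ℝ :=
  ∑ p ∈ antidiagonal n,
    q ^ (p.1 ^ 2 + m * p.1) / (qPoch q p.1 * qPoch q p.2 * qPoch q (m + p.1))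

lemma durfeeSum_succ (hq : ∀ n : ℕ, q ^ (n + 1) ≠ 1) (m n : ℕ) :
    (1 - q ^ (n + 1)) * durfeeSum q m (n + 1)
      = durfeeSum q m n + q ^ (m + n + 1) * durfeeSum q (m + 1) n := by
  have h0 := qPoch_ne_zero hq
  have h1 := one_sub_pow_succ_ne_zero hq
  set f : ℕ × ℕ → ℝ := fun p =>
    q ^ (p.1 ^ 2 + m * p.1) / (qPoch q p.1 * qPoch q p.2 * qPoch q (m + p.1))
  have hsplit : (1 - q ^ (n + 1)) * durfeeSum q m (n + 1)
      = ∑ p ∈ antidiagonal (n + 1), (1 - q ^ p.2) * f p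
        + ∑ p ∈ antidiagonal (n + 1), q ^ p.2 * (1 - q ^ p.1) * f p := by
    rw [durfeeSum, mul_sum, ← sum_add_distrib]
    refine sum_congr rfl fun p hp => ?_
    rw [← mem_antidiagonal.1 hp, pow_add]
    ring
  rw [hsplit, sum_antidiagonal_succ', sum_antidiagonal_succ, durfeeSum, durfeeSum, mul_sum]
  simp only [pow_zero, sub_self, zero_mul, mul_zero, zero_add]
  congr 1
  · refine sum_congr rfl fun p _ => ?_
    simp only [f, qPoch_succ p.2]
    field_simp [h0, h1]
  · refine sum_congr rfl fun p hp => ?_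
    obtain rfl : p.1 + p.2 = n := mem_antidiagonal.1 hp
    have hm : qPoch q (m + (p.1 + 1)) = qPoch q (m + p.1) * (1 - q ^ (m + p.1 + 1)) :=
      qPoch_succ _
    rw [show m + 1 + p.1 = m + (p.1 + 1) by ring]
    simp only [f, qPoch_succ p.1, hm]
    field_simp [h0, h1]
    ring

lemma durfeeSum_eq (hq : ∀ n : ℕ, q ^ (n + 1) ≠ 1) (m n : ℕ) :
    durfeeSum q m n = 1 / (qPoch q n * qPoch q (m + n)) := by
  induction n generalizing m with
  | zero => simp [durfeeSum]
  | succ n ih =>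
    have h0 := qPoch_ne_zero hq
    have h1 := one_sub_pow_succ_ne_zero hq
    rw [← mul_right_inj' (h1 n), durfeeSum_succ hq, ih, ih, show m + 1 + n = m + n + 1 by ring,
      ← add_assoc, qPoch_succ n, qPoch_succ (m + n)]
    field_simp [h0, h1]
    ring

lemma sum_range_pow_div_qPoch_sq_eq_sum_antidiagonal (hq : ∀ n : ℕ, q ^ (n + 1) ≠ 1) (N : ℕ) :
    ∑ k ∈ range (N + 1), q ^ k / qPoch q k ^ 2
      = ∑ p ∈ antidiagonal N, q ^ (p.1 ^ 2 + p.1) / qPoch q p.1 ^ 2 * (qPoch q p.2)⁻¹ := by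
  induction N with
  | zero => simp
  | succ N ih =>
    have h0 := qPoch_ne_zero hq
    have h1 := one_sub_pow_succ_ne_zero hq
    have hD : q ^ (N + 1) / qPoch q (N + 1) ^ 2 = q ^ (N + 1) * durfeeSum q 0 (N + 1) := by
      rw [durfeeSum_eq hq, zero_add]
      ring
    rw [sum_range_succ, ih, hD, durfeeSum, sum_antidiagonal_succ', sum_antidiagonal_succ', mul_add,
      mul_sum, ← add_assoc, add_comm _ (_ * _), add_assoc, ← sum_add_distrib]
    simp only [qPoch_zero, zero_mul, add_zero, zero_add, mul_one, inv_one]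
    congr 1
    · ring
    · refine sum_congr rfl fun p hp => ?_
      obtain rfl : p.1 + p.2 = N := mem_antidiagonal.1 hp
      rw [qPoch_succ]
      field_simp [h0, h1]
      ring

lemma pow_succ_ne_one (hq : |q| < 1) (n : ℕ) : q ^ (n + 1) ≠ 1 := by
  refine fun h => (pow_lt_one₀ (abs_nonneg q) hq n.succ_ne_zero).ne ?_
  rw [← abs_pow, h, abs_one]

lemma summable_norm_pow_succ (hq : |q| < 1) : Summable fun n : ℕ => ‖q ^ (n + 1)‖ := by
  simpa [summable_nat_add_iff] using summable_geometric_of_lt_one (abs_nonneg q) hq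

lemma multipliable_one_sub_pow_succ (hq : |q| < 1) :
    Multipliable fun n : ℕ => 1 - q ^ (n + 1) := by
  simpa [sub_eq_add_neg] using multipliable_one_add_of_summable (f := fun n => -q ^ (n + 1))
    (by simpa using summable_norm_pow_succ hq)

lemma tprod_one_sub_pow_succ_ne_zero (hq : |q| < 1) : ∏' n : ℕ, (1 - q ^ (n + 1)) ≠ 0 := by
  simpa [sub_eq_add_neg] using
    tprod_one_add_ne_zero_of_summable (f := fun n => -q ^ (n + 1))
      (fun n => by simpa [← sub_eq_add_neg, sub_eq_zero] using (pow_succ_ne_one hq n).symm)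
      (by simpa using summable_norm_pow_succ hq)

lemma tendsto_qPoch (hq : |q| < 1) :
    Tendsto (qPoch q) atTop (𝓝 (∏' n : ℕ, (1 - q ^ (n + 1)))) :=
  (multipliable_one_sub_pow_succ hq).hasProd.tendsto_prod_nat

lemma summable_norm_pow_div_qPoch_sq (hq : |q| < 1) {e : ℕ → ℕ} (he : ∀ k, k ≤ e k) :
    Summable fun k => ‖q ^ e k / qPoch q k ^ 2‖ := by
  have hinv := (tendsto_qPoch hq).inv₀ (tprod_one_sub_pow_succ_ne_zero hq)
  obtain ⟨C, hC⟩ := hinv.norm.bddAbove_range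
  refine ((summable_geometric_of_lt_one (abs_nonneg q) hq).mul_right (C ^ 2)).of_nonneg_of_le
    (fun k => norm_nonneg _) fun k => ?_
  rw [div_eq_mul_inv, norm_mul, norm_pow, ← inv_pow, norm_pow, Real.norm_eq_abs]
  exact mul_le_mul (pow_le_pow_of_le_one (abs_nonneg q) hq.le (he k))
    (pow_le_pow_left₀ (norm_nonneg _) (hC ⟨k, rfl⟩) 2) (by positivity) (by positivity)

end

theorem ramanujan_false_theta (q : ℝ) (hq : |q| < 1) :
    (∏' j : ℕ, (1 - q ^ (j + 1))) ^ 2 * ∑' k : ℕ, q ^ k / (qPoch q k) ^ 2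
      = (∏' j : ℕ, (1 - q ^ (j + 1))) * ∑' k : ℕ, q ^ (k ^ 2 + k) / (qPoch q k) ^ 2 := by
  have hP := tprod_one_sub_pow_succ_ne_zero hq
  have hA : Tendsto (fun N => ∑ k ∈ range (N + 1), q ^ k / qPoch q k ^ 2) atTop
      (𝓝 (∑' k : ℕ, q ^ k / qPoch q k ^ 2)) :=
    (summable_norm_pow_div_qPoch_sq hq (e := fun k => k) fun _ => le_rfl).of_norm.hasSum
      |>.tendsto_sum_nat.comp (tendsto_add_atTop_nat 1)
  have hB := tendsto_sum_antidiagonal_mul_of_tendsto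
    (summable_norm_pow_div_qPoch_sq hq (e := fun k => k ^ 2 + k) fun k => Nat.le_add_left k _)
    ((tendsto_qPoch hq).inv₀ hP)
  simp_rw [sum_range_pow_div_qPoch_sq_eq_sum_antidiagonal (pow_succ_ne_one hq)] at hA
  rw [tendsto_nhds_unique hA hB]
  field_simp
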